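/- Let (Ω, μ) be a measure space, f : Ω → ℝ measurable with e^{sf}, e^f, e^{2f} integrable, 0 < s < 1, and suppose (∫ e^f dμ)² ≥ C · ∫ e^{2f} dμ for some constant C > 0. Then ∫ e^f dμ ≤ C^{−(1−s)/s} · (∫ e^{sf} dμ)^{1/s}. -/

import Mathlib

/-!
Hölder's inequality with exponents `2 - s` and `(2 - s) / (1 - s)` interpolates `e^f` between
`e^{sf}` and `e^{2f}`: with `θ = 1 / (2 - s)`,
`∫ e^f ≤ (∫ e^{sf})^θ (∫ e^{2f})^{1-θ} ≤ (∫ e^{sf})^θ C^{-(1-θ)} (∫ e^f)^{2(1-θ)}`.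
Since `2(1 - θ) < 1`, the power of `∫ e^f` on the right can be absorbed into the left side.
-/

open MeasureTheory Real

lemma Real.le_rpow_inv_one_sub_of_le_mul_rpow {a b θ : ℝ} (ha : 0 < a) (hθ : θ < 1)
    (h : a ≤ b * a ^ θ) : a ≤ b ^ (1 - θ)⁻¹ := by
  have hθ' : 0 < 1 - θ := sub_pos.2 hθ
  have habs : a ^ (1 - θ) ≤ b := by
    rw [rpow_sub ha, rpow_one, div_le_iff₀ (rpow_pos_of_pos ha θ)]
    exact h
  calc a = (a ^ (1 - θ)) ^ (1 - θ)⁻¹ := by rw [← rpow_mul ha.le, mul_inv_cancel₀ hθ'.ne', rpow_one]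
    _ ≤ b ^ (1 - θ)⁻¹ := rpow_le_rpow (rpow_nonneg ha.le _) habs (inv_nonneg.2 hθ'.le)

section

variable {Ω : Type*} [MeasurableSpace Ω] {μ : Measure Ω} {f : Ω → ℝ}

lemma memLp_exp_of_integrable_exp_mul {p : ℝ} (hp : 0 < p)
    (h : Integrable (fun x => exp (p * f x)) μ) :
    MemLp (fun x => exp (f x)) (ENNReal.ofReal p) μ := by
  have hexp : ∀ x, exp (p * f x) = exp (f x) ^ p := fun x => by rw [← exp_mul, mul_comm]
  have hmeas : AEStronglyMeasurable (fun x => exp (f x)) μ := by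
    refine ((continuous_rpow_const (inv_nonneg.2 hp.le)).comp_aestronglyMeasurable
      h.aestronglyMeasurable).congr (.of_forall fun x => ?_)
    simp only [hexp, ← rpow_mul (exp_pos _).le, mul_inv_cancel₀ hp.ne', rpow_one]
  refine (integrable_norm_rpow_iff hmeas (by simpa using hp) ENNReal.ofReal_ne_top).1 ?_
  simpa only [norm_of_nonneg (exp_pos _).le, ENNReal.toReal_ofReal hp.le, hexp] using h

/-- Log-convexity of `p ↦ ∫ exp (p * f)`, by Hölder's inequality. -/
theorem integral_exp_mul_le_rpow_mul_rpow {p q r θ : ℝ} (hθ₀ : 0 < θ) (hθ₁ : θ < 1)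
    (hr : θ * p + (1 - θ) * q = r)
    (hp : Integrable (fun x => exp (p * f x)) μ) (hq : Integrable (fun x => exp (q * f x)) μ) :
    ∫ x, exp (r * f x) ∂μ
      ≤ (∫ x, exp (p * f x) ∂μ) ^ θ * (∫ x, exp (q * f x) ∂μ) ^ (1 - θ) := by
  have hθ₁' : 0 < 1 - θ := sub_pos.2 hθ₁
  have hu : MemLp (fun x => exp (θ * p * f x)) (ENNReal.ofReal θ⁻¹) μ :=
    memLp_exp_of_integrable_exp_mul (inv_pos.2 hθ₀) <| by
      simpa only [← mul_assoc, inv_mul_cancel_left₀ hθ₀.ne'] using hp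
  have hv : MemLp (fun x => exp ((1 - θ) * q * f x)) (ENNReal.ofReal (1 - θ)⁻¹) μ :=
    memLp_exp_of_integrable_exp_mul (inv_pos.2 hθ₁') <| by
      simpa only [← mul_assoc, inv_mul_cancel_left₀ hθ₁'.ne'] using hq
  have holder := integral_mul_le_Lp_mul_Lq_of_nonneg (.inv_one_sub_inv hθ₀ hθ₁)
    (.of_forall fun x => (exp_pos _).le) (.of_forall fun x => (exp_pos _).le) hu hv
  have hmul : ∀ x, exp (θ * p * f x) * exp ((1 - θ) * q * f x) = exp (r * f x) := fun x => by
    rw [← exp_add, ← hr]; ring_nf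
  have hpow : ∀ {a : ℝ}, 0 < a → ∀ c x, exp (a * c * f x) ^ a⁻¹ = exp (c * f x) := by
    intro a ha c x
    rw [← exp_mul]; field_simp
  simpa only [hmul, hpow hθ₀, hpow hθ₁', one_div, inv_inv] using holder

end

theorem interpolation_estimate_general
    {Ω : Type*} [MeasurableSpace Ω] (μ : Measure Ω)
    (f : Ω → ℝ) (s : ℝ) (hs0 : 0 < s) (hs1 : s < 1)
    (hsf : Integrable (fun x => Real.exp (s * f x)) μ)
    (h2f : Integrable (fun x => Real.exp (2 * f x)) μ)
    (h1fpos : 0 < ∫ x, Real.exp (f x) ∂μ)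
    (C : ℝ) (hC : 0 < C)
    (hconstraint : C * ∫ x, Real.exp (2 * f x) ∂μ
      ≤ (∫ x, Real.exp (f x) ∂μ) ^ 2) :
    ∫ x, Real.exp (f x) ∂μ
      ≤ C ^ (-(1 - s) / s) * (∫ x, Real.exp (s * f x) ∂μ) ^ (1 / s) := by
  set A := ∫ x, exp (f x) ∂μ
  set S := ∫ x, exp (s * f x) ∂μ
  set T := ∫ x, exp (2 * f x) ∂μ
  set θ := (2 - s)⁻¹
  have hθs : θ * (2 - s) = 1 := inv_mul_cancel₀ (by linarith)
  have hθ₀ : 0 < θ := inv_pos.2 (by linarith)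
  have hθ₁ : θ < 1 := inv_lt_one_of_one_lt₀ (by linarith)
  have hgap : 1 - 2 * (1 - θ) = θ * s := by linear_combination hθs
  have hS : 0 ≤ S := integral_nonneg fun x => (exp_pos _).le
  have hT : 0 ≤ T := integral_nonneg fun x => (exp_pos _).le
  have hinterp : A ≤ S ^ θ * T ^ (1 - θ) := by
    simpa only [one_mul] using integral_exp_mul_le_rpow_mul_rpow (r := 1) hθ₀ hθ₁
      (by linear_combination -hθs) hsf h2f
  have hT_le : T ^ (1 - θ) ≤ (A ^ 2 / C) ^ (1 - θ) :=
    rpow_le_rpow hT (by rwa [le_div_iff₀' hC]) (by linarith)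
  have hself : A ≤ (S ^ θ * C ^ (-(1 - θ))) * A ^ (2 * (1 - θ)) := by
    calc A ≤ S ^ θ * (A ^ 2 / C) ^ (1 - θ) := hinterp.trans (by gcongr)
      _ = _ := by
        rw [div_rpow (by positivity) hC.le, ← rpow_natCast, ← rpow_mul h1fpos.le, rpow_neg hC.le]
        push_cast; ring
  calc A ≤ (S ^ θ * C ^ (-(1 - θ))) ^ (1 - 2 * (1 - θ))⁻¹ :=
        Real.le_rpow_inv_one_sub_of_le_mul_rpow h1fpos
          (by linarith [mul_pos hθ₀ hs0]) hself
    _ = C ^ (-(1 - s) / s) * S ^ (1 / s) := by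
        rw [mul_rpow (rpow_nonneg hS _) (rpow_nonneg hC.le _), ← rpow_mul hS, ← rpow_mul hC.le,
          mul_comm, hgap]
        congr 2
        · field_simp
          linear_combination hθs
        · field_simp

theorem interpolation_estimate
    {Ω : Type*} [MeasurableSpace Ω] (μ : Measure Ω)
    (f : Ω → ℝ) (hf : Measurable f) (s : ℝ) (hs0 : 0 < s) (hs1 : s < 1)
    (hsf : Integrable (fun x => Real.exp (s * f x)) μ)
    (h1f : Integrable (fun x => Real.exp (f x)) μ)
    (h2f : Integrable (fun x => Real.exp (2 * f x)) μ)
    (hsfpos : 0 < ∫ x, Real.exp (s * f x) ∂μ)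
    (h1fpos : 0 < ∫ x, Real.exp (f x) ∂μ)
    (h2fpos : 0 < ∫ x, Real.exp (2 * f x) ∂μ)
    (C : ℝ) (hC : 0 < C)
    (hconstraint : C * ∫ x, Real.exp (2 * f x) ∂μ
      ≤ (∫ x, Real.exp (f x) ∂μ) ^ 2) :
    ∫ x, Real.exp (f x) ∂μ
      ≤ C ^ (-(1 - s) / s) * (∫ x, Real.exp (s * f x) ∂μ) ^ (1 / s) :=
  interpolation_estimate_general μ f s hs0 hs1 hsf h2f h1fpos C hC hconstraint
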